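/- (Birkhoff's formula.) For every entrywise positive K×K real matrix M, the Birkhoff contraction coefficient satisfies τ(M) = (1 − √φ(M))/(1 + √φ(M)), where φ(M) = min_{p,q,r,s} (M_{pq} M_{rs})/(M_{rq} M_{ps}) is the minimum of the cross ratios over all quadruples of indices. -/

import Mathlib

/-- The Hilbert projective metric `d(x,y) = log ((max_i x_i/y_i) / (min_j x_j/y_j))`
for entrywise positive vectors in `ℝ^K`. -/
noncomputable def hilbertDist {K : ℕ} (x y : Fin K → ℝ) : ℝ :=
  Real.log ((⨆ i, x i / y i) / (⨅ i, x i / y i))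

/-- The Birkhoff contraction coefficient
`τ(M) = sup { d(xM, yM)/d(x,y) : x, y entrywise positive, d(x,y) > 0 }`. -/
noncomputable def birkhoff {K : ℕ} (M : Matrix (Fin K) (Fin K) ℝ) : ℝ :=
  sSup {t : ℝ | ∃ x y : Fin K → ℝ, (∀ i, 0 < x i) ∧ (∀ i, 0 < y i) ∧
    0 < hilbertDist x y ∧
    t = hilbertDist (Matrix.vecMul x M) (Matrix.vecMul y M) / hilbertDist x y}

/-!
Upper bound. For positive `x, y` and a column `j`, `(x ᵥ* M) j / (y ᵥ* M) j` is the mean of the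
ratios `x i / y i ∈ [a, b]` weighted by `y i * M i j`, and any two such weight vectors `u, v`
satisfy `φ u i v l ≤ u l v i`. Splitting each ratio into its distances to `a` and `b` reduces the
comparison of two such means to two rows, where the derivative of
`σ ↦ log ((p₁ + e^σ p₂) / (q₁ + e^σ q₂))` is at most `(1 - √φ) / (1 + √φ)` by AM-GM; the mean
value theorem then bounds `d(xM, yM)` by that multiple of `log (b / a) = d(x, y)`.

Lower bound. Scaling the `r`-th coordinate of `y` by `e^h` moves `y` by exactly `h`, and as
`h → 0` the contraction of the columns `q, s` tends to
`y r M r q / (yM) q - y r M r s / (yM) s`. For a quadruple `(p, q, r, s)` attaining `φ` and `y`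
carried by the rows `p, r` in the proportion `M r s : √φ M p s`, this is `(1 - √φ) / (1 + √φ)`;
a positive `y` is obtained by adding `ε` to every coordinate and letting `ε → 0`.
-/

open Real Matrix Finset

section TwoPoint

variable {p₁ p₂ q₁ q₂ e : ℝ}

theorem two_mul_sub_le_of_cross (hp₁ : 0 ≤ p₁) (hp₂ : 0 ≤ p₂) (hq₁ : 0 ≤ q₁) (hq₂ : 0 ≤ q₂)
    (he₀ : 0 ≤ e) (he₁ : e ≤ 1) (hcross : e ^ 2 * (p₂ * q₁) ≤ p₁ * q₂) {s : ℝ} (hs : 0 ≤ s) :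
    2 * s * (e * (p₂ * q₁) - p₁ * q₂) ≤ (1 - e) * (p₁ * q₁ + s ^ 2 * (p₂ * q₂)) := by
  set α := √(p₂ * q₁)
  set β := √(p₁ * q₂)
  have hα : α ^ 2 = p₂ * q₁ := sq_sqrt (by positivity)
  have hβ : β ^ 2 = p₁ * q₂ := sq_sqrt (by positivity)
  have heα : e * α ≤ β := by
    rw [← sqrt_sq he₀, ← sqrt_mul (by positivity)]
    exact sqrt_le_sqrt hcross
  have amgm : 2 * s * (α * β) ≤ p₁ * q₁ + s ^ 2 * (p₂ * q₂) := by
    have hαβ : α * β = √(p₁ * q₁) * √(p₂ * q₂) := by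
      rw [← sqrt_mul (by positivity), ← sqrt_mul (by positivity)]
      ring_nf
    rw [hαβ]
    nlinarith [sq_nonneg (√(p₁ * q₁) - s * √(p₂ * q₂)), sq_sqrt (mul_nonneg hp₁ hq₁),
      sq_sqrt (mul_nonneg hp₂ hq₂)]
  -- `e α² - β² = (e α - β)(α + β) + (1 - e) α β`
  have key : e * α ^ 2 - β ^ 2 ≤ (1 - e) * (α * β) := by
    nlinarith [mul_nonneg (sub_nonneg.2 heα) (add_nonneg (sqrt_nonneg (p₂ * q₁))
      (sqrt_nonneg (p₁ * q₂)))]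
  rw [← hα, ← hβ]
  nlinarith [mul_le_mul_of_nonneg_left amgm (sub_nonneg.2 he₁),
    mul_le_mul_of_nonneg_left key (mul_nonneg zero_le_two hs)]

theorem mul_div_sub_mul_div_le_of_cross (hp₁ : 0 ≤ p₁) (hp₂ : 0 ≤ p₂) (hq₁ : 0 ≤ q₁)
    (hq₂ : 0 ≤ q₂) (he₀ : 0 ≤ e) (he₁ : e ≤ 1) (hcross : e ^ 2 * (p₂ * q₁) ≤ p₁ * q₂) {s : ℝ}
    (hs : 0 ≤ s) (hp : 0 < p₁ + s * p₂) (hq : 0 < q₁ + s * q₂) :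
    s * p₂ / (p₁ + s * p₂) - s * q₂ / (q₁ + s * q₂) ≤ (1 - e) / (1 + e) := by
  rw [div_sub_div _ _ hp.ne' hq.ne', div_le_div_iff₀ (by positivity) (by positivity)]
  nlinarith [two_mul_sub_le_of_cross hp₁ hp₂ hq₁ hq₂ he₀ he₁ hcross hs]

theorem mul_add_mul_pos (hp₁ : 0 ≤ p₁) (hp₂ : 0 ≤ p₂) (hp : 0 < p₁ + p₂) {a s : ℝ} (ha : 0 < a)
    (hs : 0 < s) : 0 < a * p₁ + s * p₂ := by
  rcases hp₂.eq_or_lt with rfl | hp₂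
  · simpa using mul_pos ha hp
  · positivity

theorem log_div_sub_log_div_le_of_cross (hp₁ : 0 ≤ p₁) (hp₂ : 0 ≤ p₂) (hq₁ : 0 ≤ q₁)
    (hq₂ : 0 ≤ q₂) (hp : 0 < p₁ + p₂) (hq : 0 < q₁ + q₂) (he₀ : 0 ≤ e) (he₁ : e ≤ 1)
    (hcross : e ^ 2 * (p₂ * q₁) ≤ p₁ * q₂) {a b : ℝ} (ha : 0 < a) (hab : a ≤ b) :
    log ((a * p₁ + b * p₂) / (p₁ + p₂)) - log ((a * q₁ + b * q₂) / (q₁ + q₂)) ≤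
      (1 - e) / (1 + e) * log (b / a) := by
  have hpos : ∀ {c d : ℝ}, 0 ≤ c → 0 ≤ d → 0 < c + d → ∀ σ, 0 < a * c + exp σ * d :=
    fun hc hd hcd σ => mul_add_mul_pos hc hd hcd ha (exp_pos σ)
  set F : ℝ → ℝ := fun σ => log (a * p₁ + exp σ * p₂) - log (a * q₁ + exp σ * q₂)
  have hF : ∀ σ, HasDerivAt F
      (exp σ * p₂ / (a * p₁ + exp σ * p₂) - exp σ * q₂ / (a * q₁ + exp σ * q₂)) σ := fun σ =>
    ((((hasDerivAt_exp σ).mul_const p₂).const_add _).log (hpos hp₁ hp₂ hp σ).ne').sub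
      ((((hasDerivAt_exp σ).mul_const q₂).const_add _).log (hpos hq₁ hq₂ hq σ).ne')
  have hF' : ∀ σ, deriv F σ ≤ (1 - e) / (1 + e) := fun σ =>
    (hF σ).deriv ▸ mul_div_sub_mul_div_le_of_cross (mul_nonneg ha.le hp₁) hp₂
      (mul_nonneg ha.le hq₁) hq₂ he₀ he₁ (by linarith [mul_le_mul_of_nonneg_left hcross ha.le])
      (exp_pos σ).le (hpos hp₁ hp₂ hp σ) (hpos hq₁ hq₂ hq σ)
  have hmvt := image_sub_le_mul_sub_of_deriv_le (fun σ => (hF σ).differentiableAt) hF'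
    (log_le_log ha hab)
  have hb : 0 < b := ha.trans_le hab
  simp only [F, exp_log ha, exp_log hb, ← mul_add] at hmvt
  rw [log_div (mul_add_mul_pos hp₁ hp₂ hp ha hb).ne' hp.ne',
    log_div (mul_add_mul_pos hq₁ hq₂ hq ha hb).ne' hq.ne', log_div hb.ne' ha.ne']
  rw [log_mul ha.ne' hp.ne', log_mul ha.ne' hq.ne'] at hmvt
  linarith

end TwoPoint

theorem mul_sum_mul_sum_le_of_cross {ι : Type*} [Fintype ι] {u v f g : ι → ℝ} {e : ℝ}
    (hf : ∀ i, 0 ≤ f i) (hg : ∀ i, 0 ≤ g i) (hcross : ∀ i l, e ^ 2 * (u i * v l) ≤ u l * v i) :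
    e ^ 2 * ((∑ i, u i * f i) * ∑ i, v i * g i) ≤ (∑ i, u i * g i) * ∑ i, v i * f i := by
  calc e ^ 2 * ((∑ i, u i * f i) * ∑ i, v i * g i)
      = ∑ i, ∑ l, e ^ 2 * (u i * v l) * (f i * g l) := by
        rw [sum_mul_sum, mul_sum]
        refine sum_congr rfl fun i _ => ?_
        rw [mul_sum]
        exact sum_congr rfl fun l _ => by ring
    _ ≤ ∑ i, ∑ l, u l * v i * (f i * g l) :=
        sum_le_sum fun i _ => sum_le_sum fun l _ =>
          mul_le_mul_of_nonneg_right (hcross i l) (mul_nonneg (hf i) (hg l))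
    _ = (∑ i, u i * g i) * ∑ i, v i * f i := by
        rw [sum_mul_sum, sum_comm]
        exact sum_congr rfl fun i _ => sum_congr rfl fun l _ => by ring

theorem log_weighted_mean_sub_le {ι : Type*} [Fintype ι] {u v r : ι → ℝ} {a b e : ℝ}
    (hu : ∀ i, 0 ≤ u i) (hv : ∀ i, 0 ≤ v i) (hU : 0 < ∑ i, u i) (hV : 0 < ∑ i, v i)
    (ha : 0 < a) (hr : ∀ i, r i ∈ Set.Icc a b) (he₀ : 0 ≤ e) (he₁ : e ≤ 1)
    (hcross : ∀ i l, e ^ 2 * (u i * v l) ≤ u l * v i) :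
    log ((∑ i, u i * r i) / ∑ i, u i) - log ((∑ i, v i * r i) / ∑ i, v i) ≤
      (1 - e) / (1 + e) * log (b / a) := by
  have hab : a ≤ b := by
    obtain ⟨i, -⟩ := nonempty_of_sum_ne_zero hU.ne'
    exact (hr i).1.trans (hr i).2
  rcases hab.eq_or_lt with rfl | hab
  · have hra : ∀ i, r i = a := fun i => le_antisymm (hr i).2 (hr i).1
    simp only [hra, ← sum_mul, mul_div_cancel_left₀ _ hU.ne', mul_div_cancel_left₀ _ hV.ne',
      div_self ha.ne', log_one, sub_self, mul_zero, le_refl]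
  have hlower : ∀ i, 0 ≤ r i - a := fun i => sub_nonneg.2 (hr i).1
  have hupper : ∀ i, 0 ≤ b - r i := fun i => sub_nonneg.2 (hr i).2
  -- writing `r i = ((b - r i) a + (r i - a) b) / (b - a)` turns each mean into a two-row one
  have htotal : ∀ w : ι → ℝ,
      ∑ i, w i * (b - r i) + ∑ i, w i * (r i - a) = (b - a) * ∑ i, w i := fun w => by
    simp only [mul_sub, sum_sub_distrib, ← sum_mul]
    ring
  have hmean : ∀ w : ι → ℝ,
      (a * ∑ i, w i * (b - r i) + b * ∑ i, w i * (r i - a)) /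
        (∑ i, w i * (b - r i) + ∑ i, w i * (r i - a)) = (∑ i, w i * r i) / ∑ i, w i := by
    intro w
    have hnum : a * ∑ i, w i * (b - r i) + b * ∑ i, w i * (r i - a) =
        (b - a) * ∑ i, w i * r i := by
      simp only [mul_sub, sum_sub_distrib, ← sum_mul]
      ring
    rw [hnum, htotal, mul_div_mul_left _ _ (sub_pos.2 hab).ne']
  have htwo := log_div_sub_log_div_le_of_cross
    (sum_nonneg fun i _ => mul_nonneg (hu i) (hupper i))
    (sum_nonneg fun i _ => mul_nonneg (hu i) (hlower i))
    (sum_nonneg fun i _ => mul_nonneg (hv i) (hupper i))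
    (sum_nonneg fun i _ => mul_nonneg (hv i) (hlower i))
    (htotal u ▸ mul_pos (sub_pos.2 hab) hU) (htotal v ▸ mul_pos (sub_pos.2 hab) hV) he₀ he₁
    (mul_sum_mul_sum_le_of_cross hlower hupper hcross)
    ha hab.le
  rwa [hmean u, hmean v] at htwo

section HilbertDist

variable {K : ℕ} {x y : Fin K → ℝ}

theorem log_div_sub_log_div_le_hilbertDist (hx : ∀ i, 0 < x i) (hy : ∀ i, 0 < y i)
    (j k : Fin K) : log (x j / y j) - log (x k / y k) ≤ hilbertDist x y := by
  have hpos : ∀ i, 0 < x i / y i := fun i => div_pos (hx i) (hy i)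
  have : Nonempty (Fin K) := ⟨j⟩
  obtain ⟨k₀, hk₀⟩ := exists_eq_ciInf_of_finite (f := fun i => x i / y i)
  have hsup : x j / y j ≤ ⨆ i, x i / y i := le_ciSup (Finite.bddAbove_range (fun i => x i / y i)) j
  unfold hilbertDist
  rw [← hk₀, log_div ((hpos j).trans_le hsup).ne' (hpos k₀).ne']
  gcongr ?_ - ?_
  · exact log_le_log (hpos j) hsup
  · exact log_le_log (hpos k₀) (hk₀ ▸ ciInf_le (Finite.bddBelow_range (fun i => x i / y i)) k)

theorem hilbertDist_le [Nonempty (Fin K)] (hx : ∀ i, 0 < x i) (hy : ∀ i, 0 < y i) {c : ℝ}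
    (h : ∀ j k, log (x j / y j) - log (x k / y k) ≤ c) : hilbertDist x y ≤ c := by
  obtain ⟨j, hj⟩ := exists_eq_ciSup_of_finite (f := fun i => x i / y i)
  obtain ⟨k, hk⟩ := exists_eq_ciInf_of_finite (f := fun i => x i / y i)
  unfold hilbertDist
  rw [← hj, ← hk, log_div (div_pos (hx j) (hy j)).ne' (div_pos (hx k) (hy k)).ne']
  exact h j k

theorem hilbertDist_nonneg [Nonempty (Fin K)] (hx : ∀ i, 0 < x i) (hy : ∀ i, 0 < y i) :
    0 ≤ hilbertDist x y := by
  obtain ⟨j⟩ := ‹Nonempty (Fin K)›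
  simpa using log_div_sub_log_div_le_hilbertDist hx hy j j

theorem update_exp_mul_pos (hy : ∀ i, 0 < y i) (r : Fin K) (h : ℝ) (i : Fin K) :
    0 < Function.update y r (exp h * y r) i := by
  rcases eq_or_ne i r with rfl | hi
  · simpa using mul_pos (exp_pos h) (hy i)
  · simpa [hi] using hy i

theorem hilbertDist_update_exp_mul (hy : ∀ i, 0 < y i) {p r : Fin K} (hpr : p ≠ r) {h : ℝ}
    (hh : 0 ≤ h) : hilbertDist (Function.update y r (exp h * y r)) y = h := by
  have : Nonempty (Fin K) := ⟨p⟩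
  have hratio : ∀ i, Function.update y r (exp h * y r) i / y i = if i = r then exp h else 1 := by
    intro i
    rcases eq_or_ne i r with rfl | hi
    · simp [(hy i).ne']
    · simp [hi, (hy i).ne']
  have hx := update_exp_mul_pos hy r h
  refine le_antisymm (hilbertDist_le hx hy fun j k => ?_) ?_
  · have hj : log (if j = r then exp h else 1) ≤ h := by split_ifs <;> simp [hh]
    have hk : 0 ≤ log (if k = r then exp h else 1) := by split_ifs <;> simp [hh]
    rw [hratio, hratio]
    linarith
  · have hrp := log_div_sub_log_div_le_hilbertDist hx hy r p
    rw [hratio, hratio] at hrp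
    simpa [hpr] using hrp

end HilbertDist

theorem vecMul_update_apply {m n α : Type*} [Fintype m] [DecidableEq m]
    [NonUnitalNonAssocRing α] (M : Matrix m n α) (y : m → α) (r : m) (c : α) (j : n) :
    (Function.update y r c ᵥ* M) j = (y ᵥ* M) j + (c - y r) * M r j := by
  rw [Pi.update_eq_sub_add_single]
  simp only [add_vecMul, sub_vecMul, single_vecMul, Pi.add_apply, Pi.sub_apply,
    Pi.smul_apply, row_apply, smul_eq_mul, sub_mul]
  abel

section Birkhoff

variable {K : ℕ} {M : Matrix (Fin K) (Fin K) ℝ} {x y : Fin K → ℝ}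

theorem vecMul_pos_of_nonneg (hM : ∀ i j, 0 < M i j) (hy : ∀ i, 0 ≤ y i) {r : Fin K}
    (hyr : 0 < y r) (j : Fin K) : 0 < (y ᵥ* M) j :=
  sum_pos' (fun i _ => mul_nonneg (hy i) (hM i j).le) ⟨r, mem_univ r, mul_pos hyr (hM r j)⟩

theorem vecMul_pos (hM : ∀ i j, 0 < M i j) (hy : ∀ i, 0 < y i) (j : Fin K) : 0 < (y ᵥ* M) j :=
  vecMul_pos_of_nonneg hM (fun i => (hy i).le) (hy j) j

theorem hilbertDist_vecMul_le [Nonempty (Fin K)] (hM : ∀ i j, 0 < M i j) {e : ℝ} (he₀ : 0 ≤ e)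
    (he₁ : e ≤ 1) (hcross : ∀ i j l k, e ^ 2 * (M l j * M i k) ≤ M i j * M l k)
    (hx : ∀ i, 0 < x i) (hy : ∀ i, 0 < y i) :
    hilbertDist (x ᵥ* M) (y ᵥ* M) ≤ (1 - e) / (1 + e) * hilbertDist x y := by
  obtain ⟨k₀, hk₀⟩ := exists_eq_ciInf_of_finite (f := fun i => x i / y i)
  have ha : 0 < ⨅ i, x i / y i := hk₀ ▸ div_pos (hx k₀) (hy k₀)
  have hr : ∀ i, x i / y i ∈ Set.Icc (⨅ i, x i / y i) (⨆ i, x i / y i) := fun i =>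
    ⟨ciInf_le (Finite.bddBelow_range (fun i => x i / y i)) i,
      le_ciSup (Finite.bddAbove_range (fun i => x i / y i)) i⟩
  have hsum : ∀ j, ∑ i, y i * M i j * (x i / y i) = (x ᵥ* M) j := fun j =>
    sum_congr rfl fun i _ => by field_simp [(hy i).ne']
  refine hilbertDist_le (vecMul_pos hM hx) (vecMul_pos hM hy) fun j k => ?_
  have hmean := log_weighted_mean_sub_le (u := fun i => y i * M i j) (v := fun i => y i * M i k)
    (fun i => (mul_pos (hy i) (hM i j)).le) (fun i => (mul_pos (hy i) (hM i k)).le)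
    (vecMul_pos hM hy j) (vecMul_pos hM hy k) ha hr he₀ he₁
    (fun i l => by nlinarith [hcross l j i k, mul_pos (hy i) (hy l)])
  simp only [hsum] at hmean
  exact hmean

theorem birkhoff_le {c : ℝ} (hc : 0 ≤ c)
    (h : ∀ x y : Fin K → ℝ, (∀ i, 0 < x i) → (∀ i, 0 < y i) →
      hilbertDist (x ᵥ* M) (y ᵥ* M) ≤ c * hilbertDist x y) :
    birkhoff M ≤ c := by
  refine Real.sSup_le ?_ hc
  rintro _ ⟨x, y, hx, hy, hd, rfl⟩
  rw [div_le_iff₀ hd]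
  exact h x y hx hy

theorem birkhoff_nonneg [Nonempty (Fin K)] (hM : ∀ i j, 0 < M i j) : 0 ≤ birkhoff M := by
  refine Real.sSup_nonneg ?_
  rintro _ ⟨x, y, hx, hy, hd, rfl⟩
  exact div_nonneg (hilbertDist_nonneg (vecMul_pos hM hx) (vecMul_pos hM hy)) hd.le

theorem div_hilbertDist_le_birkhoff [Nonempty (Fin K)] (hM : ∀ i j, 0 < M i j)
    (hx : ∀ i, 0 < x i) (hy : ∀ i, 0 < y i) (hd : 0 < hilbertDist x y) :
    hilbertDist (x ᵥ* M) (y ᵥ* M) / hilbertDist x y ≤ birkhoff M := by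
  refine le_csSup ⟨1, ?_⟩ ⟨x, y, hx, hy, hd, rfl⟩
  -- bounded by `1`: the case `e = 0` of `hilbertDist_vecMul_le`
  rintro _ ⟨x, y, hx, hy, hd, rfl⟩
  rw [div_le_one hd]
  simpa using hilbertDist_vecMul_le hM le_rfl zero_le_one
    (fun i j l k => by simpa using (mul_pos (hM i j) (hM l k)).le) hx hy

theorem sub_le_birkhoff (hM : ∀ i j, 0 < M i j) (hy : ∀ i, 0 < y i) {p r : Fin K} (hpr : p ≠ r)
    (q s : Fin K) :
    y r * M r q / (y ᵥ* M) q - y r * M r s / (y ᵥ* M) s ≤ birkhoff M := by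
  have : Nonempty (Fin K) := ⟨p⟩
  set x : ℝ → Fin K → ℝ := fun h => Function.update y r (exp h * y r)
  have hx0 : x 0 = y := by simp [x]
  have hxM : ∀ h j, (x h ᵥ* M) j = (y ᵥ* M) j + (exp h - 1) * (y r * M r j) := fun h j => by
    rw [vecMul_update_apply]
    ring
  have hderiv : ∀ j, HasDerivAt (fun h => (x h ᵥ* M) j) (y r * M r j) 0 := fun j => by
    simp only [hxM]
    simpa using (((hasDerivAt_exp 0).sub_const 1).mul_const (y r * M r j)).const_add ((y ᵥ* M) j)
  have hG := ((hderiv q).log (hx0 ▸ (vecMul_pos hM hy q).ne')).sub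
    ((hderiv s).log (hx0 ▸ (vecMul_pos hM hy s).ne'))
  simp only [hx0] at hG
  -- the left side is the derivative at `0` of the `q`,`s` log-ratio along `x`, and `d(x h, y) = h`
  refine le_of_tendsto hG.tendsto_slope_zero_right
    (eventually_nhdsWithin_of_forall fun h (hh : 0 < h) => ?_)
  have hxpos : ∀ i, 0 < x h i := update_exp_mul_pos hy r h
  have hd : hilbertDist (x h) y = h := hilbertDist_update_exp_mul hy hpr hh.le
  calc h⁻¹ • ((log ((x (0 + h) ᵥ* M) q) - log ((x (0 + h) ᵥ* M) s)) -
        (log ((x 0 ᵥ* M) q) - log ((x 0 ᵥ* M) s)))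
      = (log ((x h ᵥ* M) q / (y ᵥ* M) q) - log ((x h ᵥ* M) s / (y ᵥ* M) s)) /
          hilbertDist (x h) y := by
        rw [hd, zero_add, smul_eq_mul, log_div (vecMul_pos hM hxpos q).ne' (vecMul_pos hM hy q).ne',
          log_div (vecMul_pos hM hxpos s).ne' (vecMul_pos hM hy s).ne']
        rw [hx0]
        ring
    _ ≤ hilbertDist (x h ᵥ* M) (y ᵥ* M) / hilbertDist (x h) y := by
        gcongr
        · rw [hd]; exact hh.le
        · exact log_div_sub_log_div_le_hilbertDist (vecMul_pos hM hxpos) (vecMul_pos hM hy) q s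
    _ ≤ birkhoff M := div_hilbertDist_le_birkhoff hM hxpos hy (hd.symm ▸ hh)

theorem sub_le_birkhoff_of_nonneg (hM : ∀ i j, 0 < M i j) (hy : ∀ i, 0 ≤ y i) {p r : Fin K}
    (hyr : 0 < y r) (hpr : p ≠ r) (q s : Fin K) :
    y r * M r q / (y ᵥ* M) q - y r * M r s / (y ᵥ* M) s ≤ birkhoff M := by
  set L : ℝ → ℝ := fun ε => (y r + ε) * M r q / ((fun i => y i + ε) ᵥ* M) q -
    (y r + ε) * M r s / ((fun i => y i + ε) ᵥ* M) s
  have hL : ContinuousAt L 0 := by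
    have hq : ((fun i => y i + 0) ᵥ* M) q ≠ 0 := by
      simpa using (vecMul_pos_of_nonneg hM hy hyr q).ne'
    have hs : ((fun i => y i + 0) ᵥ* M) s ≠ 0 := by
      simpa using (vecMul_pos_of_nonneg hM hy hyr s).ne'
    fun_prop (disch := assumption)
  have hlim := hL.tendsto.mono_left (nhdsWithin_le_nhds (s := Set.Ioi 0))
  simp only [L, add_zero] at hlim
  exact le_of_tendsto hlim (eventually_nhdsWithin_of_forall fun ε (hε : 0 < ε) =>
    sub_le_birkhoff hM (fun i => add_pos_of_nonneg_of_pos (hy i) hε) hpr q s)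

end Birkhoff

theorem cross_ratio_bound_le_birkhoff {K : ℕ} {M : Matrix (Fin K) (Fin K) ℝ}
    (hM : ∀ i j, 0 < M i j) (p q r s : Fin K) :
    (1 - √(M p q * M r s / (M r q * M p s))) / (1 + √(M p q * M r s / (M r q * M p s))) ≤
      birkhoff M := by
  have : Nonempty (Fin K) := ⟨p⟩
  rcases eq_or_ne p r with rfl | hpr
  · rw [div_self (mul_pos (hM p q) (hM p s)).ne', sqrt_one, sub_self, zero_div]
    exact birkhoff_nonneg hM
  set e := √(M p q * M r s / (M r q * M p s))
  have hratio : 0 < M p q * M r s / (M r q * M p s) :=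
    div_pos (mul_pos (hM p q) (hM r s)) (mul_pos (hM r q) (hM p s))
  have he : 0 < e := sqrt_pos.2 hratio
  have hcross : M p q * M r s = e ^ 2 * (M r q * M p s) := by
    rw [sq_sqrt hratio.le, div_mul_cancel₀ _ (mul_pos (hM r q) (hM p s)).ne']
  set y : Fin K → ℝ := Pi.single p (M r s) + Pi.single r (e * M p s)
  have hyr : y r = e * M p s := by simp [y, hpr]
  have hyM : ∀ j, (y ᵥ* M) j = M r s * M p j + e * M p s * M r j := fun j => by
    simp [y, add_vecMul, single_vecMul, mul_assoc]
  have hy : 0 ≤ y := add_nonneg (Pi.single_nonneg.2 (hM r s).le)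
    (Pi.single_nonneg.2 (mul_pos he (hM p s)).le)
  convert sub_le_birkhoff_of_nonneg hM hy (hyr ▸ mul_pos he (hM p s)) hpr q s using 1
  rw [hyM, hyM, hyr, show M r s * M p q + e * M p s * M r q = (1 + e) * (e * M p s * M r q) by
    linear_combination hcross]
  have := (hM r s).ne'; have := (hM p s).ne'; have := (hM r q).ne'
  field_simp

/-- Birkhoff's formula: for an entrywise positive matrix `M`,
`τ(M) = (1 − √φ(M)) / (1 + √φ(M))`, where
`φ(M) = min_{p,q,r,s} (M_{pq} M_{rs}) / (M_{rq} M_{ps})`. -/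
theorem birkhoff_formula
    {K : ℕ} (hK : 0 < K)
    (M : Matrix (Fin K) (Fin K) ℝ) (hM_pos : ∀ i j, 0 < M i j) :
    birkhoff M =
      (1 - Real.sqrt (⨅ t : Fin K × Fin K × Fin K × Fin K,
          M t.1 t.2.1 * M t.2.2.1 t.2.2.2 / (M t.2.2.1 t.2.1 * M t.1 t.2.2.2))) /
        (1 + Real.sqrt (⨅ t : Fin K × Fin K × Fin K × Fin K,
          M t.1 t.2.1 * M t.2.2.1 t.2.2.2 / (M t.2.2.1 t.2.1 * M t.1 t.2.2.2))) := by
  have : Nonempty (Fin K) := ⟨⟨0, hK⟩⟩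
  obtain ⟨⟨p, q, r, s⟩, hpqrs⟩ := exists_eq_ciInf_of_finite
    (f := fun t : Fin K × Fin K × Fin K × Fin K =>
      M t.1 t.2.1 * M t.2.2.1 t.2.2.2 / (M t.2.2.1 t.2.1 * M t.1 t.2.2.2))
  set φ := ⨅ t : Fin K × Fin K × Fin K × Fin K,
    M t.1 t.2.1 * M t.2.2.1 t.2.2.2 / (M t.2.2.1 t.2.1 * M t.1 t.2.2.2)
  have hφ_le : ∀ i j l k, φ ≤ M i j * M l k / (M l j * M i k) := fun i j l k =>
    ciInf_le (Finite.bddBelow_range _) (i, j, l, k)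
  have hφ₀ : 0 ≤ φ := hpqrs ▸ (div_pos (mul_pos (hM_pos p q) (hM_pos r s))
    (mul_pos (hM_pos r q) (hM_pos p s))).le
  have hφ₁ : φ ≤ 1 := by
    simpa [div_self (mul_pos (hM_pos p p) (hM_pos p p)).ne'] using hφ_le p p p p
  refine le_antisymm (birkhoff_le ?_ fun x y hx hy => ?_)
    (hpqrs ▸ cross_ratio_bound_le_birkhoff hM_pos p q r s)
  · exact div_nonneg (sub_nonneg.2 (sqrt_le_one.2 hφ₁)) (by positivity)
  · refine hilbertDist_vecMul_le hM_pos (sqrt_nonneg φ) (sqrt_le_one.2 hφ₁) (fun i j l k => ?_)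
      hx hy
    rw [sq_sqrt hφ₀]
    exact (le_div_iff₀ (mul_pos (hM_pos l j) (hM_pos i k))).1 (hφ_le i j l k)
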